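/- arXiv:2203.02829 — 2 statements merged into one kernel-verified Lean document; each statement's English description precedes it below -/
import Mathlib

section
/- Let H(x,y) = y²/2 − x²/2 + x⁴/4 (the eight-loop Hamiltonian). Then y³ dx = (12/7·H + 3/7·x²)·y dx − (3/7)·x y dH + d((1/7)·x y³) as polynomial 1-forms on ℝ². -/
/-- partial derivative in the first variable -/
noncomputable def pdx (F : ℝ → ℝ → ℝ) (x y : ℝ) : ℝ := deriv (fun t => F t y) x

/-- partial derivative in the second variable -/
noncomputable def pdy (F : ℝ → ℝ → ℝ) (x y : ℝ) : ℝ := deriv (fun t => F x t) y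

/-- eight-loop Hamiltonian -/
noncomputable def H (x y : ℝ) : ℝ := y^2/2 - x^2/2 + x^4/4

theorem pdx_H (x y : ℝ) : pdx H x y = x ^ 3 - x :=
  (((hasDerivAt_const x (y ^ 2 / 2)).sub ((hasDerivAt_pow 2 x).div_const 2)).add
    ((hasDerivAt_pow 4 x).div_const 4)).congr_deriv (by norm_num; ring) |>.deriv

theorem pdy_H (x y : ℝ) : pdy H x y = y := by
  simp [pdy, H]

theorem pdx_const_mul_mul_pow (c : ℝ) (n : ℕ) (x y : ℝ) :
    pdx (fun x y => c * x * y ^ n) x y = c * y ^ n := by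
  simp [pdx]

theorem pdy_const_mul_mul_pow (c : ℝ) (n : ℕ) (x y : ℝ) :
    pdy (fun x y => c * x * y ^ n) x y = c * x * (n * y ^ (n - 1)) := by
  simp [pdy]

/-- (iii1):  y³dx = (12/7·H + 3/7·x²)·y dx − (3/7)·xy·dH + d((1/7)·xy³) -/
theorem decomposition_iii1 : ∀ x y : ℝ,
    y^3 = (12/7 * H x y + 3/7 * x^2) * y - 3/7 * (x*y) * pdx H x y
      + pdx (fun x y => 1/7 * x * y^3) x y
  ∧ (0 : ℝ) = - (3/7) * (x*y) * pdy H x y + pdy (fun x y => 1/7 * x * y^3) x y := by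
  intro x y
  rw [pdx_H, pdy_H, pdx_const_mul_mul_pow, pdy_const_mul_mul_pow, H]
  constructor <;> push_cast <;> ring
end

section
/- Let H(x,y) = y²/2 − x²/2 + x⁴/4. Then x y⁴ dx = −(2/3)·(4H·x² + x² − y² + x²y²)·dH + d(2x²H² − 2/3·H² + H·x⁴ + (1/6 − 1/3·H)·x⁶ − 1/8·x⁸ + 1/40·x¹⁰) as polynomial 1-forms on ℝ². -/
/-- (iii7):  xy⁴ dx = −(2/3)·(4H·x² + x² − y² + x²y²)·dH
    + d(2x²H² − 2/3·H² + H·x⁴ + (1/6 − 1/3·H)·x⁶ − 1/8·x⁸ + 1/40·x¹⁰) -/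
theorem decomposition_iii7 : ∀ x y : ℝ,
    x * y^4 = - (2/3) * (4 * H x y * x^2 + x^2 - y^2 + x^2 * y^2) * pdx H x y
      + pdx (fun x y => 2 * x^2 * (H x y)^2 - 2/3 * (H x y)^2 + H x y * x^4
          + (1/6 - 1/3 * H x y) * x^6 - 1/8 * x^8 + 1/40 * x^10) x y
  ∧ (0 : ℝ) = - (2/3) * (4 * H x y * x^2 + x^2 - y^2 + x^2 * y^2) * pdy H x y
      + pdy (fun x y => 2 * x^2 * (H x y)^2 - 2/3 * (H x y)^2 + H x y * x^4
          + (1/6 - 1/3 * H x y) * x^6 - 1/8 * x^8 + 1/40 * x^10) x y := by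
  intro x y
  have hx : pdx H x y = -x + x^3 := by
    simp only [pdx, H]
    rw [show (fun t:ℝ => y^2/2 - t^2/2 + t^4/4)
        = fun t:ℝ => (1/2*y^2) + (-1/2)*t^2 + (1/4)*t^4 from funext fun t => by ring]
    simp (disch := fun_prop) [deriv_add, deriv_const_mul_field, deriv_pow]
    ring
  have hy : pdy H x y = y := by
    simp only [pdy, H]
    rw [show (fun t:ℝ => t^2/2 - x^2/2 + x^4/4)
        = fun t:ℝ => (-1/2*x^2 + 1/4*x^4) + (1/2)*t^2 from funext fun t => by ring]
    simp (disch := fun_prop) [deriv_add, deriv_const_mul_field, deriv_pow]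
    ring
  have gx : pdx (fun x y => 2 * x^2 * (H x y)^2 - 2/3 * (H x y)^2 + H x y * x^4
      + (1/6 - 1/3 * H x y) * x^6 - 1/8 * x^8 + 1/40 * x^10) x y
      = (1/3*y^2 + 1/2*y^4)*(2*x) + (-1/6 + -2/3*y^2)*(4*x^3)
        + (1/3 + 1/3*y^2)*(6*x^5) + (-1/4)*(8*x^7) + (1/15)*(10*x^9) := by
    simp only [pdx, H]
    rw [show (fun t:ℝ => 2 * t^2 * (y^2/2 - t^2/2 + t^4/4)^2 - 2/3 * (y^2/2 - t^2/2 + t^4/4)^2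
          + (y^2/2 - t^2/2 + t^4/4) * t^4 + (1/6 - 1/3 * (y^2/2 - t^2/2 + t^4/4)) * t^6
          - 1/8 * t^8 + 1/40 * t^10)
        = fun t:ℝ => (-1/6*y^4) + (1/3*y^2 + 1/2*y^4)*t^2 + (-1/6 + -2/3*y^2)*t^4
          + (1/3 + 1/3*y^2)*t^6 + (-1/4)*t^8 + (1/15)*t^10 from funext fun t => by ring]
    simp (disch := fun_prop) [deriv_add, deriv_const_mul_field, deriv_pow]
  have gy : pdy (fun x y => 2 * x^2 * (H x y)^2 - 2/3 * (H x y)^2 + H x y * x^4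
      + (1/6 - 1/3 * H x y) * x^6 - 1/8 * x^8 + 1/40 * x^10) x y
      = (1/3*x^2 + -2/3*x^4 + 1/3*x^6)*(2*y) + (-1/6 + 1/2*x^2)*(4*y^3) := by
    simp only [pdy, H]
    rw [show (fun t:ℝ => 2 * x^2 * (t^2/2 - x^2/2 + x^4/4)^2 - 2/3 * (t^2/2 - x^2/2 + x^4/4)^2
          + (t^2/2 - x^2/2 + x^4/4) * x^4 + (1/6 - 1/3 * (t^2/2 - x^2/2 + x^4/4)) * x^6
          - 1/8 * x^8 + 1/40 * x^10)
        = fun t:ℝ => (-1/6*x^4 + 1/3*x^6 + -1/4*x^8 + 1/15*x^10)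
          + (1/3*x^2 + -2/3*x^4 + 1/3*x^6)*t^2 + (-1/6 + 1/2*x^2)*t^4 from funext fun t => by ring]
    simp (disch := fun_prop) [deriv_add, deriv_const_mul_field, deriv_pow]
  rw [hx, hy, gx, gy]
  simp only [H]
  constructor <;> ring
end
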